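/- arXiv:0910.5492 — 5 statements merged into one kernel-verified Lean document; each statement's English description precedes it below -/
import Mathlib

section
/- Let λ₁, λ₂ be finite positive Borel measures on ℝ and let λ₁' , λ₂' be measures with bounded densities f₁, f₂ with respect to λ₁, λ₂. If the functions s ↦ exp(2πi tₙ s) converge weak-* to ψ₁ in L^∞(λ₁), to ψ₂ in L^∞(λ₂), and to ψ in L^∞(λ₁ ∗ λ₂), then ∫ ψ(s₁+s₂) dλ₁'(s₁) dλ₂'(s₂) = (∫ ψ₁ dλ₁')·(∫ ψ₂ dλ₂'). -/
/-
Both sides are limits of the same sequence. Testing the weak-* convergence against the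
Radon–Nikodym density of an absolutely continuous finite measure shows that `∫ eₙ dλ' → ∫ ψ dλ'`
for every such `λ'`, where `eₙ s = exp(2πi tₙ s)`. Since `λ₁' ∗ λ₂' ≪ λ₁ ∗ λ₂`, and `eₙ` is a
character, `∫ eₙ d(λ₁' ∗ λ₂') = (∫ eₙ dλ₁') (∫ eₙ dλ₂')`; the left side tends to `∫ ψ d(λ₁' ∗ λ₂')`,
the right one to `(∫ ψ₁ dλ₁') (∫ ψ₂ dλ₂')`. As `ψ` need not be measurable, rewriting
`∫ ψ(s₁ + s₂)` as `∫ ψ d(λ₁' ∗ λ₂')` goes through a disintegration, not a change of variables.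
-/

open MeasureTheory Filter Real Complex
open scoped NNReal ENNReal

/-- Weak-* convergence in `L^∞(μ)`. -/
def WeakStarTendsto (μ : Measure ℝ) (φn : ℕ → ℝ → ℂ) (φ : ℝ → ℂ) : Prop :=
  ∀ f : ℝ → ℂ, Integrable f μ →
    Tendsto (fun n => ∫ s, φn n s * f s ∂μ) atTop (nhds (∫ s, φ s * f s ∂μ))

open ProbabilityTheory

theorem MeasureTheory.AEStronglyMeasurable.of_comp_fst_of_isFiniteMeasure
    {β Ω E : Type*} [MeasurableSpace β] [MeasurableSpace Ω] [StandardBorelSpace Ω] [Nonempty Ω]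
    [NormedAddCommGroup E] [NormedSpace ℝ E] [CompleteSpace E]
    {ρ : Measure (β × Ω)} [IsFiniteMeasure ρ] {g : β → E}
    (hg : AEStronglyMeasurable (fun p => g p.1) ρ) : AEStronglyMeasurable g ρ.fst := by
  simpa using hg.integral_condKernel

theorem integral_comp_add_eq_integral_map_add {G E : Type*} [AddGroup G] [MeasurableSpace G]
    [MeasurableAdd₂ G] [MeasurableNeg G] [StandardBorelSpace G]
    [NormedAddCommGroup E] [NormedSpace ℝ E] [CompleteSpace E]
    (ρ : Measure (G × G)) [IsFiniteMeasure ρ] (g : G → E) :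
    ∫ p, g (p.1 + p.2) ∂ρ = ∫ s, g s ∂ρ.map (fun p => p.1 + p.2) := by
  by_cases hg : AEStronglyMeasurable g (ρ.map fun p => p.1 + p.2)
  · exact (integral_map (by fun_prop) hg).symm
  rw [integral_non_aestronglyMeasurable hg, integral_non_aestronglyMeasurable]
  refine fun hcomp => hg ?_
  -- `e (x, y) = (x + y, x)` makes the sum a coordinate, to which `condKernel` applies.
  let e := (MeasurableEquiv.shearAddRight G).trans MeasurableEquiv.prodComm
  have he : (ρ.map e).fst = ρ.map fun p => p.1 + p.2 := by
    rw [Measure.fst, Measure.map_map measurable_fst e.measurable]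
    rfl
  rw [← he]
  refine AEStronglyMeasurable.of_comp_fst_of_isFiniteMeasure ?_
  rwa [e.measurableEmbedding.aestronglyMeasurable_map_iff]

theorem MeasureTheory.Measure.AbsolutelyContinuous.conv {M : Type*} [AddMonoid M]
    [MeasurableSpace M] [MeasurableAdd₂ M] {μ₁ μ₂ ν₁ ν₂ : Measure M} [SFinite ν₂]
    (h₁ : μ₁ ≪ ν₁) (h₂ : μ₂ ≪ ν₂) : μ₁ ∗ μ₂ ≪ ν₁ ∗ ν₂ :=
  (h₁.prod h₂).map (by fun_prop)

theorem isFiniteMeasure_withDensity_of_le {α : Type*} [MeasurableSpace α] (μ : Measure α)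
    [IsFiniteMeasure μ] {f : α → ℝ≥0} {C : ℝ≥0} (hf : ∀ a, f a ≤ C) :
    IsFiniteMeasure (μ.withDensity fun a => (f a : ℝ≥0∞)) := by
  refine isFiniteMeasure_withDensity (ne_top_of_le_ne_top ?_
    (lintegral_mono fun a => ENNReal.coe_le_coe.2 (hf a)))
  simp [lintegral_const, ENNReal.mul_eq_top]

theorem integral_exp_conv (μ₁ μ₂ : Measure ℝ) [IsFiniteMeasure μ₁] [IsFiniteMeasure μ₂] (τ : ℝ) :
    ∫ s, exp (2 * π * I * τ * s) ∂(μ₁ ∗ μ₂)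
      = (∫ s, exp (2 * π * I * τ * s) ∂μ₁) * ∫ s, exp (2 * π * I * τ * s) ∂μ₂ := by
  have hcharFun (μ : Measure ℝ) : ∫ s, exp (2 * π * I * τ * s) ∂μ = charFun μ (2 * π * τ) := by
    rw [charFun_apply_real]
    push_cast
    ring_nf
  simp only [hcharFun, charFun_conv]

theorem WeakStarTendsto.tendsto_integral_of_absolutelyContinuous {μ ν : Measure ℝ}
    [SigmaFinite μ] [IsFiniteMeasure ν] {φn : ℕ → ℝ → ℂ} {φ : ℝ → ℂ}
    (h : WeakStarTendsto μ φn φ) (hνμ : ν ≪ μ) :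
    Tendsto (fun n => ∫ s, φn n s ∂ν) atTop (nhds (∫ s, φ s ∂ν)) := by
  have hdensity : Integrable (fun s => ((ν.rnDeriv μ s).toReal : ℂ)) μ :=
    Measure.integrable_toReal_rnDeriv.ofReal
  have hν (χ : ℝ → ℂ) : ∫ s, χ s * (ν.rnDeriv μ s).toReal ∂μ = ∫ s, χ s ∂ν := by
    simp_rw [mul_comm (χ _), ← Complex.real_smul]
    exact integral_rnDeriv_smul hνμ
  simpa only [hν] using h _ hdensity

theorem limit_of_convolution_integrals_general
    (lam₁ lam₂ : Measure ℝ) [IsFiniteMeasure lam₁] [IsFiniteMeasure lam₂]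
    (f₁ f₂ : ℝ → ℝ≥0)
    (C₁ C₂ : ℝ≥0) (hb₁ : ∀ s, f₁ s ≤ C₁) (hb₂ : ∀ s, f₂ s ≤ C₂)
    (t : ℕ → ℝ) (ψ₁ ψ₂ ψ : ℝ → ℂ)
    (h1 : WeakStarTendsto lam₁ (fun n s => Complex.exp (2 * π * Complex.I * t n * s)) ψ₁)
    (h2 : WeakStarTendsto lam₂ (fun n s => Complex.exp (2 * π * Complex.I * t n * s)) ψ₂)
    (h : WeakStarTendsto (Measure.map (fun p : ℝ × ℝ => p.1 + p.2) (lam₁.prod lam₂))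
      (fun n s => Complex.exp (2 * π * Complex.I * t n * s)) ψ) :
    ∫ p : ℝ × ℝ, ψ (p.1 + p.2)
        ∂((lam₁.withDensity fun s => (f₁ s : ℝ≥0∞)).prod
          (lam₂.withDensity fun s => (f₂ s : ℝ≥0∞)))
      = (∫ s, ψ₁ s ∂(lam₁.withDensity fun s => (f₁ s : ℝ≥0∞)))
        * ∫ s, ψ₂ s ∂(lam₂.withDensity fun s => (f₂ s : ℝ≥0∞)) := by
  have := isFiniteMeasure_withDensity_of_le lam₁ hb₁
  have := isFiniteMeasure_withDensity_of_le lam₂ hb₂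
  have hac₁ := withDensity_absolutelyContinuous lam₁ fun s => (f₁ s : ℝ≥0∞)
  have hac₂ := withDensity_absolutelyContinuous lam₂ fun s => (f₂ s : ℝ≥0∞)
  have hψ₁ := h1.tendsto_integral_of_absolutelyContinuous hac₁
  have hψ₂ := h2.tendsto_integral_of_absolutelyContinuous hac₂
  have hψ := h.tendsto_integral_of_absolutelyContinuous (hac₁.conv hac₂)
  simp only [integral_exp_conv] at hψ
  rw [integral_comp_add_eq_integral_map_add]
  exact tendsto_nhds_unique hψ (hψ₁.mul hψ₂)

theorem limit_of_convolution_integrals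
    (lam₁ lam₂ : Measure ℝ) [IsFiniteMeasure lam₁] [IsFiniteMeasure lam₂]
    (f₁ f₂ : ℝ → ℝ≥0) (hf₁ : Measurable f₁) (hf₂ : Measurable f₂)
    (C₁ C₂ : ℝ≥0) (hb₁ : ∀ s, f₁ s ≤ C₁) (hb₂ : ∀ s, f₂ s ≤ C₂)
    (t : ℕ → ℝ) (ψ₁ ψ₂ ψ : ℝ → ℂ)
    (h1 : WeakStarTendsto lam₁ (fun n s => Complex.exp (2 * π * Complex.I * t n * s)) ψ₁)
    (h2 : WeakStarTendsto lam₂ (fun n s => Complex.exp (2 * π * Complex.I * t n * s)) ψ₂)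
    (h : WeakStarTendsto (Measure.map (fun p : ℝ × ℝ => p.1 + p.2) (lam₁.prod lam₂))
      (fun n s => Complex.exp (2 * π * Complex.I * t n * s)) ψ) :
    ∫ p : ℝ × ℝ, ψ (p.1 + p.2)
        ∂((lam₁.withDensity fun s => (f₁ s : ℝ≥0∞)).prod
          (lam₂.withDensity fun s => (f₂ s : ℝ≥0∞)))
      = (∫ s, ψ₁ s ∂(lam₁.withDensity fun s => (f₁ s : ℝ≥0∞)))
        * ∫ s, ψ₂ s ∂(lam₂.withDensity fun s => (f₂ s : ℝ≥0∞)) :=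
  limit_of_convolution_integrals_general lam₁ lam₂ f₁ f₂ C₁ C₂ hb₁ hb₂ t ψ₁ ψ₂ ψ h1 h2 h
end

section
/- Let (Ω, F, P) be a probability space and C₀, C₁ independent sub-σ-algebras. Let τ be a measure-preserving automorphism of (Ω, F, P) with τ∘τ = id which maps C₀ onto C₁ and C₁ onto C₀, and let G be a sub-σ-algebra contained in the τ-invariant σ-algebra. Then for every f ∈ L²(G): (i) E[f | C₀] and E[f | C₁] have the same L² norm; (ii) E[f | C₀] − E[E[f|C₀] | trivial] and E[f | C₁] − E[E[f|C₁] | trivial] are orthogonal in L²₀; and consequently ‖E[f | C_i] − E[f]‖ ≤ (1/√2)·‖E[f | C₀ ∨ C₁] − E[f]‖ ≤ (1/√2)·‖f − E[f]‖ for i = 0, 1. -/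
/-!
Composing with `τ` carries `E[f | C₀]` to a version of `E[f | C₁]`, because `f ∘ τ = f` and
`τ` pulls `C₀` back to `C₁`; hence the two conditional expectations have the same norm.
Independence makes the centred conditional expectations `a = E[f | C₀] - E f` and
`b = E[f | C₁] - E f` orthogonal, and both are projections of `h = E[f | C₀ ∨ C₁] - E f`, so
`‖a‖² + ‖b‖² ≤ ‖h‖²` (Bessel's inequality); with `‖a‖ = ‖b‖` this gives `‖a‖ ≤ ‖h‖ / √2`.
-/

open MeasureTheory ProbabilityTheory
open scoped ENNReal InnerProductSpace

theorem norm_sq_add_norm_sq_le_of_inner_eq {E : Type*} [NormedAddCommGroup E]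
    [InnerProductSpace ℝ E] {a b h : E} (hab : ⟪a, b⟫_ℝ = 0)
    (ha : ⟪a, h⟫_ℝ = ‖a‖ ^ 2) (hb : ⟪b, h⟫_ℝ = ‖b‖ ^ 2) :
    ‖a‖ ^ 2 + ‖b‖ ^ 2 ≤ ‖h‖ ^ 2 := by
  have hsub := norm_sub_sq_real h (a + b)
  rw [norm_add_sq_real, hab, inner_add_right, real_inner_comm a, real_inner_comm b, ha, hb] at hsub
  nlinarith [sq_nonneg ‖h - (a + b)‖]

theorem ENNReal.le_ofReal_inv_sqrt_two_mul {x y : ℝ≥0∞} (h : x ^ 2 + x ^ 2 ≤ y ^ 2) :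
    x ≤ ENNReal.ofReal (1 / Real.sqrt 2) * y := by
  rw [← ENNReal.pow_le_pow_left_iff two_ne_zero, mul_pow, ← ENNReal.ofReal_pow (by positivity),
    div_pow, Real.sq_sqrt zero_le_two, one_pow, one_div, ENNReal.ofReal_inv_of_pos zero_lt_two,
    ENNReal.ofReal_ofNat]
  rw [← two_mul] at h
  calc x ^ 2 = 2⁻¹ * (2 * x ^ 2) :=
        (ENNReal.inv_mul_cancel_left two_ne_zero ENNReal.ofNat_ne_top).symm
    _ ≤ 2⁻¹ * y ^ 2 := by gcongr

theorem Measurable.comp_eq_self_of_forall_preimage_eq {Ω β : Type*} {G : MeasurableSpace Ω}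
    [MeasurableSpace β] [MeasurableSingletonClass β] {f : Ω → β} {τ : Ω → Ω}
    (hf : Measurable[G] f) (hτ : ∀ s, MeasurableSet[G] s → τ ⁻¹' s = s) : f ∘ τ = f := by
  funext ω
  have hfiber := hτ _ (hf (measurableSet_singleton (f ω)))
  exact (Set.ext_iff.1 hfiber ω).2 rfl

namespace MeasureTheory

theorem MeasurePreserving.condExp_comp_ae_eq {α β : Type*} {m0 : MeasurableSpace α}
    {m mβ : MeasurableSpace β} {μ : Measure α} {ν : Measure β} [IsFiniteMeasure μ]
    {τ : α → β} (hτ : MeasurePreserving τ μ ν) (hm : m ≤ mβ) {f : β → ℝ} (hf : Integrable f ν) :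
    μ[f ∘ τ | m.comap τ] =ᵐ[μ] ν[f|m] ∘ τ := by
  have : IsFiniteMeasure ν := hτ.map_eq ▸ Measure.isFiniteMeasure_map μ τ
  refine (ae_eq_condExp_of_forall_setIntegral_eq (hτ.measurable.mono le_rfl hm).comap_le
    (hτ.integrable_comp_of_integrable hf) (fun s _ _ =>
    (hτ.integrable_comp_of_integrable integrable_condExp).integrableOn) ?_
    ((stronglyMeasurable_condExp (m := m) (μ := ν) (f := f)).comp_measurable
      (Measurable.of_comap_le le_rfl)).aestronglyMeasurable).symm
  rintro _ ⟨t, ht, rfl⟩ _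
  have hsetIntegral_comp : ∀ g : β → ℝ, AEStronglyMeasurable g ν →
      ∫ x in τ ⁻¹' t, g (τ x) ∂μ = ∫ y in t, g y ∂ν := fun g hg => by
    rw [← hτ.map_eq] at hg ⊢
    exact (setIntegral_map (hm t ht) hg hτ.aemeasurable).symm
  rw [Function.comp_def, Function.comp_def, hsetIntegral_comp _ integrable_condExp.1,
    hsetIntegral_comp _ hf.1, setIntegral_condExp hm hf ht]

section

variable {Ω : Type*} {m₀ m₁ m m0 : MeasurableSpace Ω} {μ : Measure Ω}

theorem integral_mul_eq_inner_toLp {u w : Ω → ℝ} (hu : MemLp u 2 μ) (hw : MemLp w 2 μ) :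
    ∫ ω, u ω * w ω ∂μ = ⟪hu.toLp u, hw.toLp w⟫_ℝ := by
  rw [L2.inner_def]
  refine integral_congr_ae ?_
  filter_upwards [hu.coeFn_toLp, hw.coeFn_toLp] with ω hu hw
  simp [hu, hw, mul_comm]

theorem MemLp.eLpNorm_eq_ofReal_norm_toLp {u : Ω → ℝ} {p : ℝ≥0∞} (hu : MemLp u p μ) :
    eLpNorm u p μ = ENNReal.ofReal ‖hu.toLp u‖ := by
  rw [Lp.norm_toLp, ENNReal.ofReal_toReal hu.eLpNorm_ne_top]

theorem integral_condExp_sub_integral [IsProbabilityMeasure μ] (hm : m ≤ m0) (f : Ω → ℝ) :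
    ∫ ω, (μ[f|m] ω - ∫ x, f x ∂μ) ∂μ = 0 := by
  rw [integral_sub integrable_condExp (integrable_const _), integral_condExp hm, integral_const,
    probReal_univ, one_smul, sub_self]

theorem integral_mul_eq_integral_mul_self_of_condExp_ae_eq [IsFiniteMeasure μ] (hm : m ≤ m0)
    {u v : Ω → ℝ} (hu : StronglyMeasurable[m] u) (hv : MemLp v 2 μ) (hvu : μ[v|m] =ᵐ[μ] u) :
    ∫ ω, u ω * v ω ∂μ = ∫ ω, u ω * u ω ∂μ := by
  have hu2 : MemLp u 2 μ := (hv.condExp one_le_two).ae_eq hvu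
  calc ∫ ω, u ω * v ω ∂μ = ∫ ω, μ[fun ω => u ω * v ω|m] ω ∂μ := (integral_condExp hm).symm
    _ = ∫ ω, u ω * u ω ∂μ := integral_congr_ae <|
      (condExp_mul_of_stronglyMeasurable_left hu (hu2.integrable_mul hv)
        (hv.integrable one_le_two)).trans (hvu.mono fun ω hω => by simp only [Pi.mul_apply, hω])

theorem condExp_sub_const [IsFiniteMeasure μ] (hm : m ≤ m0) {f : Ω → ℝ} (hf : Integrable f μ)
    (c : ℝ) : μ[fun ω => f ω - c|m] =ᵐ[μ] fun ω => μ[f|m] ω - c := by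
  have hsub := condExp_sub hf (integrable_const c) m
  rwa [condExp_const hm c] at hsub

theorem eLpNorm_condExp_sub_const_le [IsFiniteMeasure μ] (hm : m ≤ m0) {f : Ω → ℝ}
    (hf : Integrable f μ) (c : ℝ) {p : ℝ≥0∞} (hp : 1 ≤ p) :
    eLpNorm (fun ω => μ[f|m] ω - c) p μ ≤ eLpNorm (fun ω => f ω - c) p μ :=
  (eLpNorm_congr_ae (condExp_sub_const hm hf c)).symm.trans_le
    (eLpNorm_condExp_le_eLpNorm _ hp)

theorem eLpNorm_condExp_sub_sq_add_le [IsFiniteMeasure μ] (hm₀ : m₀ ≤ m) (hm₁ : m₁ ≤ m)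
    (hm : m ≤ m0) {f : Ω → ℝ} (hf : MemLp f 2 μ) (c : ℝ)
    (horth : ∫ ω, (μ[f|m₀] ω - c) * (μ[f|m₁] ω - c) ∂μ = 0) :
    eLpNorm (fun ω => μ[f|m₀] ω - c) 2 μ ^ 2 + eLpNorm (fun ω => μ[f|m₁] ω - c) 2 μ ^ 2
      ≤ eLpNorm (fun ω => μ[f|m] ω - c) 2 μ ^ 2 := by
  have hmem : ∀ m' : MeasurableSpace Ω, MemLp (fun ω => μ[f|m'] ω - c) 2 μ :=
    fun _ => (hf.condExp one_le_two).sub (memLp_const c)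
  have hproj : ∀ m', m' ≤ m →
      ⟪(hmem m').toLp _, (hmem m).toLp _⟫_ℝ = ‖(hmem m').toLp _‖ ^ 2 := by
    intro m' hm'
    rw [← real_inner_self_eq_norm_sq, ← integral_mul_eq_inner_toLp, ← integral_mul_eq_inner_toLp]
    refine integral_mul_eq_integral_mul_self_of_condExp_ae_eq (hm'.trans hm)
      (stronglyMeasurable_condExp.sub stronglyMeasurable_const) (hmem m) ?_
    exact (condExp_sub_const (hm'.trans hm) integrable_condExp c).trans
      ((condExp_condExp_of_le hm' hm).fun_comp (· - c))
  have hbessel := norm_sq_add_norm_sq_le_of_inner_eq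
    (by rwa [← integral_mul_eq_inner_toLp]) (hproj m₀ hm₀) (hproj m₁ hm₁)
  rw [(hmem m₀).eLpNorm_eq_ofReal_norm_toLp, (hmem m₁).eLpNorm_eq_ofReal_norm_toLp,
    (hmem m).eLpNorm_eq_ofReal_norm_toLp, ← ENNReal.ofReal_pow (norm_nonneg _),
    ← ENNReal.ofReal_pow (norm_nonneg _), ← ENNReal.ofReal_pow (norm_nonneg _),
    ← ENNReal.ofReal_add (by positivity) (by positivity)]
  exact ENNReal.ofReal_le_ofReal hbessel

end

end MeasureTheory

theorem ProbabilityTheory.Indep.integral_mul_eq_mul_integral {Ω : Type*}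
    {m₀ m₁ m0 : MeasurableSpace Ω} {μ : Measure Ω} (hindep : Indep m₀ m₁ μ) (hm₀ : m₀ ≤ m0)
    (hm₁ : m₁ ≤ m0) {X Y : Ω → ℝ} (hX : StronglyMeasurable[m₀] X)
    (hY : StronglyMeasurable[m₁] Y) :
    ∫ ω, X ω * Y ω ∂μ = (∫ ω, X ω ∂μ) * ∫ ω, Y ω ∂μ :=
  ((IndepFun_iff_Indep X Y μ).2 (indep_of_indep_of_le_right (indep_of_indep_of_le_left hindep
    hX.measurable.comap_le) hY.measurable.comap_le)).integral_fun_mul_eq_mul_integral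
    (hX.mono hm₀).aestronglyMeasurable (hY.mono hm₁).aestronglyMeasurable

theorem condexp_symmetric_independent_contraction_general
    {Ω : Type*} {m0 : MeasurableSpace Ω} (P : Measure Ω) [IsProbabilityMeasure P]
    (C₀ C₁ G : MeasurableSpace Ω) (hC₀ : C₀ ≤ m0) (hC₁ : C₁ ≤ m0)
    (hindep : ProbabilityTheory.Indep C₀ C₁ P)
    (τ : Ω → Ω) (hτ : @MeasurePreserving Ω Ω m0 m0 τ P P)
    (hmap0 : MeasurableSpace.comap τ C₀ = C₁)
    (hGinv : ∀ s : Set Ω, MeasurableSet[G] s → τ ⁻¹' s = s)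
    (f : Ω → ℝ) (hf : MemLp f 2 P) (hfG : StronglyMeasurable[G] f) :
    eLpNorm (P[f|C₀]) 2 P = eLpNorm (P[f|C₁]) 2 P ∧
    (∫ ω, ((P[f|C₀]) ω - ∫ x, f x ∂P) * ((P[f|C₁]) ω - ∫ x, f x ∂P) ∂P = 0) ∧
    (eLpNorm (fun ω => (P[f|C₀]) ω - ∫ x, f x ∂P) 2 P
        ≤ ENNReal.ofReal (1 / Real.sqrt 2) *
          eLpNorm (fun ω => (P[f|C₀ ⊔ C₁]) ω - ∫ x, f x ∂P) 2 P) ∧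
    (eLpNorm (fun ω => (P[f|C₁]) ω - ∫ x, f x ∂P) 2 P
        ≤ ENNReal.ofReal (1 / Real.sqrt 2) *
          eLpNorm (fun ω => (P[f|C₀ ⊔ C₁]) ω - ∫ x, f x ∂P) 2 P) ∧
    (eLpNorm (fun ω => (P[f|C₀ ⊔ C₁]) ω - ∫ x, f x ∂P) 2 P
        ≤ eLpNorm (fun ω => f ω - ∫ x, f x ∂P) 2 P) := by
  have hfi : Integrable f P := hf.integrable one_le_two
  have hswap : P[f|C₁] =ᵐ[P] P[f|C₀] ∘ τ := by
    have hcomp := hτ.condExp_comp_ae_eq hC₀ hfi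
    rwa [hfG.measurable.comp_eq_self_of_forall_preimage_eq hGinv, hmap0] at hcomp
  have hnorm : ∀ c : ℝ, eLpNorm (fun ω => P[f|C₁] ω - c) 2 P
      = eLpNorm (fun ω => P[f|C₀] ω - c) 2 P := fun c =>
    (eLpNorm_congr_ae (hswap.fun_comp (· - c))).trans <| eLpNorm_comp_measurePreserving
      (integrable_condExp.1.sub aestronglyMeasurable_const) hτ
  have horth : ∫ ω, (P[f|C₀] ω - ∫ x, f x ∂P) * (P[f|C₁] ω - ∫ x, f x ∂P) ∂P = 0 := by
    rw [hindep.integral_mul_eq_mul_integral (X := fun ω => P[f|C₀] ω - ∫ x, f x ∂P)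
      (Y := fun ω => P[f|C₁] ω - ∫ x, f x ∂P) hC₀ hC₁
      (stronglyMeasurable_condExp.sub stronglyMeasurable_const)
      (stronglyMeasurable_condExp.sub stronglyMeasurable_const),
      integral_condExp_sub_integral hC₀, zero_mul]
  have hbessel :=
    eLpNorm_condExp_sub_sq_add_le le_sup_left le_sup_right (sup_le hC₀ hC₁) hf _ horth
  rw [hnorm] at hbessel
  refine ⟨by simpa using (hnorm 0).symm, horth, ENNReal.le_ofReal_inv_sqrt_two_mul hbessel,
    (hnorm _).trans_le (ENNReal.le_ofReal_inv_sqrt_two_mul hbessel),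
    eLpNorm_condExp_sub_const_le (sup_le hC₀ hC₁) hfi _ one_le_two⟩

theorem condexp_symmetric_independent_contraction
    {Ω : Type*} {m0 : MeasurableSpace Ω} (P : Measure Ω) [IsProbabilityMeasure P]
    (C₀ C₁ G : MeasurableSpace Ω) (hC₀ : C₀ ≤ m0) (hC₁ : C₁ ≤ m0) (hG : G ≤ m0)
    (hindep : ProbabilityTheory.Indep C₀ C₁ P)
    (τ : Ω → Ω) (hτ : @MeasurePreserving Ω Ω m0 m0 τ P P) (hτinv : τ ∘ τ = id)
    (hmap0 : MeasurableSpace.comap τ C₀ = C₁)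
    (hmap1 : MeasurableSpace.comap τ C₁ = C₀)
    (hGinv : ∀ s : Set Ω, MeasurableSet[G] s → τ ⁻¹' s = s)
    (f : Ω → ℝ) (hf : MemLp f 2 P) (hfG : StronglyMeasurable[G] f) :
    eLpNorm (P[f|C₀]) 2 P = eLpNorm (P[f|C₁]) 2 P ∧
    (∫ ω, ((P[f|C₀]) ω - ∫ x, f x ∂P) * ((P[f|C₁]) ω - ∫ x, f x ∂P) ∂P = 0) ∧
    (eLpNorm (fun ω => (P[f|C₀]) ω - ∫ x, f x ∂P) 2 P
        ≤ ENNReal.ofReal (1 / Real.sqrt 2) *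
          eLpNorm (fun ω => (P[f|C₀ ⊔ C₁]) ω - ∫ x, f x ∂P) 2 P) ∧
    (eLpNorm (fun ω => (P[f|C₁]) ω - ∫ x, f x ∂P) 2 P
        ≤ ENNReal.ofReal (1 / Real.sqrt 2) *
          eLpNorm (fun ω => (P[f|C₀ ⊔ C₁]) ω - ∫ x, f x ∂P) 2 P) ∧
    (eLpNorm (fun ω => (P[f|C₀ ⊔ C₁]) ω - ∫ x, f x ∂P) 2 P
        ≤ eLpNorm (fun ω => f ω - ∫ x, f x ∂P) 2 P) :=
  condexp_symmetric_independent_contraction_general P C₀ C₁ G hC₀ hC₁ hindep τ hτ hmap0 hGinv f hf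
    hfG
end

section
/- Let (Ω, F, P) be a probability space with F = ⊗_{ω ∈ Ω_k} B_ω a product (the B_ω are jointly independent sub-σ-algebras generating F, indexed by a finite set Ω_k). Let V be a closed subspace of L²(F). For Δ ⊆ Ω_k write L²(Δ) = L²(⋁_{ω∈Δ} B_ω). If V ⊆ L²(Δ) and V ⊆ L²(Δ'), then V ⊆ L²(Δ ∩ Δ'). Consequently there exists a unique smallest subset Δ₀ ⊆ Ω_k with V ⊆ L²(Δ₀). -/
/-! Suppose `f` is a.e. measurable for both `𝓑 S = ⨆ i ∈ S, B i` and `𝓑 T`, and write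
`𝓑 T = 𝓑 (S ∩ T) ⊔ 𝓑 (T \ S)`. The σ-algebra `𝓑 (T \ S)` is independent of `𝓑 S`, which carries
`f`, so conditioning on it in addition to `𝓑 (S ∩ T)` changes nothing:
`f = 𝔼[f | 𝓑 T] = 𝔼[f | 𝓑 (S ∩ T)]` a.e. This equality is checked on the π-system of sets `s ∩ t`
with `s ∈ 𝓑 (S ∩ T)` and `t ∈ 𝓑 (T \ S)`, on which both set integrals factor as `P t • ∫ x in s, f`.
Hence the sets supporting `V` are closed under intersection; as there are finitely many, their
intersection is the least one. -/

open MeasureTheory ProbabilityTheory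

namespace MeasureTheory

variable {Ω E : Type*} [NormedAddCommGroup E] [NormedSpace ℝ E]
  {m m₁ m₂ m₃ mΩ : MeasurableSpace Ω} {μ : Measure Ω}

theorem isPiSystem_image2_inter_measurableSet (m₁ m₂ : MeasurableSpace Ω) :
    IsPiSystem (Set.image2 (· ∩ ·) {s | MeasurableSet[m₁] s} {t | MeasurableSet[m₂] t}) := by
  rintro _ ⟨s, hs, t, ht, rfl⟩ _ ⟨s', hs', t', ht', rfl⟩ -
  exact ⟨s ∩ s', hs.inter hs', t ∩ t', ht.inter ht', (Set.inter_inter_inter_comm s t s' t').symm⟩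

theorem generateFrom_image2_inter_measurableSet (m₁ m₂ : MeasurableSpace Ω) :
    MeasurableSpace.generateFrom
      (Set.image2 (· ∩ ·) {s | MeasurableSet[m₁] s} {t | MeasurableSet[m₂] t}) = m₁ ⊔ m₂ := by
  refine le_antisymm (MeasurableSpace.generateFrom_le ?_) (sup_le ?_ ?_)
  · rintro _ ⟨s, hs, t, ht, rfl⟩
    exact (le_sup_left (b := m₂) s hs).inter (le_sup_right (a := m₁) t ht)
  · exact fun s hs ↦ MeasurableSpace.measurableSet_generateFrom
      ⟨s, hs, Set.univ, MeasurableSet.univ, Set.inter_univ s⟩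
  · exact fun t ht ↦ MeasurableSpace.measurableSet_generateFrom
      ⟨Set.univ, MeasurableSet.univ, t, ht, Set.univ_inter t⟩

theorem setIntegral_eq_setIntegral_of_isPiSystem_of_univ_mem {S : Set (Set Ω)} (hm : m ≤ mΩ)
    (h_eq : m = MeasurableSpace.generateFrom S) (h_inter : IsPiSystem S) (h_univ : Set.univ ∈ S)
    {f g : Ω → E} (hf : Integrable f μ) (hg : Integrable g μ)
    (basic : ∀ t ∈ S, ∫ x in t, f x ∂μ = ∫ x in t, g x ∂μ) {t : Set Ω} (ht : MeasurableSet[m] t) :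
    ∫ x in t, f x ∂μ = ∫ x in t, g x ∂μ := by
  refine MeasurableSpace.induction_on_inter h_eq h_inter (by simp) basic ?_ ?_ t ht
  · intro t ht h_eq
    have h_univ := basic _ h_univ
    rw [setIntegral_univ, setIntegral_univ] at h_univ
    rw [setIntegral_compl (hm t ht) hf, setIntegral_compl (hm t ht) hg, h_univ, h_eq]
  · intro u hu_disj hu h_eq
    exact (hasSum_integral_iUnion (fun i ↦ hm _ (hu i)) hu_disj hf.integrableOn).unique
      (by simpa only [h_eq] using
        hasSum_integral_iUnion (fun i ↦ hm _ (hu i)) hu_disj hg.integrableOn)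

theorem setIntegral_inter_eq_measureReal_smul_of_indep [CompleteSpace E] [IsFiniteMeasure μ]
    (hm₁ : m₁ ≤ mΩ) (hm₂ : m₂ ≤ mΩ) (hindep : Indep m₁ m₂ μ) {f : Ω → E} (hf : Integrable f μ)
    (hfm : AEStronglyMeasurable[m₁] f μ) {s t : Set Ω} (hs : MeasurableSet[m₁] s)
    (ht : MeasurableSet[m₂] t) :
    ∫ x in s ∩ t, f x ∂μ = μ.real t • ∫ x in s, f x ∂μ := by
  have hfs : AEStronglyMeasurable[m₁] (s.indicator f) μ :=
    ⟨_, hfm.stronglyMeasurable_mk.indicator hs, hfm.ae_eq_mk.indicator⟩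
  calc ∫ x in s ∩ t, f x ∂μ
      = ∫ x in t, s.indicator f x ∂μ := by
        rw [setIntegral_indicator (hm₁ s hs), Set.inter_comm]
    _ = ∫ x in t, μ[s.indicator f | m₂] x ∂μ :=
        (setIntegral_condExp hm₂ (hf.indicator (hm₁ s hs)) ht).symm
    _ = ∫ x in t, (fun _ ↦ ∫ y, hfs.mk _ y ∂μ) x ∂μ := by
        refine setIntegral_congr_ae (hm₂ t ht) ?_
        filter_upwards [condExp_congr_ae (m := m₂) hfs.ae_eq_mk,
          condExp_indep_eq hm₁ hm₂ hfs.stronglyMeasurable_mk hindep] with x hx₁ hx₂ _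
        rw [hx₁, hx₂]
    _ = μ.real t • ∫ x in s, f x ∂μ := by
        rw [setIntegral_const, ← integral_congr_ae hfs.ae_eq_mk, integral_indicator (hm₁ s hs)]

theorem condExp_sup_indep_eq [CompleteSpace E] [IsFiniteMeasure μ] (hm₁₃ : m₁ ≤ m₃)
    (hm₃ : m₃ ≤ mΩ) (hm₂ : m₂ ≤ mΩ) (hindep : Indep m₃ m₂ μ) {f : Ω → E} (hf : Integrable f μ)
    (hfm : AEStronglyMeasurable[m₃] f μ) :
    μ[f | m₁ ⊔ m₂] =ᵐ[μ] μ[f | m₁] := by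
  have hm₁ : m₁ ≤ mΩ := hm₁₃.trans hm₃
  have hindep₁ : Indep m₁ m₂ μ := indep_of_indep_of_le_left hindep hm₁₃
  refine (ae_eq_condExp_of_forall_setIntegral_eq (sup_le hm₁ hm₂) hf
    (fun _ _ _ ↦ integrable_condExp.integrableOn) (fun t ht _ ↦ ?_)
    (stronglyMeasurable_condExp.mono (le_sup_left : m₁ ≤ m₁ ⊔ m₂)).aestronglyMeasurable).symm
  refine setIntegral_eq_setIntegral_of_isPiSystem_of_univ_mem (sup_le hm₁ hm₂)
    (generateFrom_image2_inter_measurableSet m₁ m₂).symm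
    (isPiSystem_image2_inter_measurableSet m₁ m₂)
    ⟨_, MeasurableSet.univ, _, MeasurableSet.univ, Set.univ_inter _⟩
    integrable_condExp hf ?_ ht
  rintro _ ⟨s, hs, u, hu, rfl⟩
  rw [setIntegral_inter_eq_measureReal_smul_of_indep hm₁ hm₂ hindep₁ integrable_condExp
      stronglyMeasurable_condExp.aestronglyMeasurable hs hu,
    setIntegral_inter_eq_measureReal_smul_of_indep hm₃ hm₂ hindep hf hfm (hm₁₃ s hs) hu,
    setIntegral_condExp hm₁ hf hs]

theorem aestronglyMeasurable_biSup_inter_of_iIndep [CompleteSpace E] [IsFiniteMeasure μ]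
    {ι : Type*} {B : ι → MeasurableSpace Ω} (hle : ∀ i, B i ≤ mΩ) (hindep : iIndep B μ)
    {S T : Set ι} {f : Ω → E} (hf : Integrable f μ)
    (hS : AEStronglyMeasurable[⨆ i ∈ S, B i] f μ) (hT : AEStronglyMeasurable[⨆ i ∈ T, B i] f μ) :
    AEStronglyMeasurable[⨆ i ∈ S ∩ T, B i] f μ := by
  have hT_eq : ⨆ i ∈ T, B i = (⨆ i ∈ S ∩ T, B i) ⊔ ⨆ i ∈ T \ S, B i := by
    rw [← iSup_union, Set.inter_comm, Set.inter_union_sdiff]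
  have hce : μ[f | ⨆ i ∈ T, B i] =ᵐ[μ] μ[f | ⨆ i ∈ S ∩ T, B i] := by
    have hind : Indep (⨆ i ∈ S, B i) (⨆ i ∈ T \ S, B i) μ :=
      indep_iSup_of_disjoint hle hindep disjoint_sdiff_self_right
    have hIS : ⨆ i ∈ S ∩ T, B i ≤ ⨆ i ∈ S, B i := biSup_mono fun _ h ↦ h.1
    rw [hT_eq]
    exact condExp_sup_indep_eq hIS (iSup₂_le fun i _ ↦ hle i) (iSup₂_le fun i _ ↦ hle i) hind hf hS
  exact stronglyMeasurable_condExp.aestronglyMeasurable.congr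
    (hce.symm.trans (condExp_of_aestronglyMeasurable' (iSup₂_le fun i _ ↦ hle i) hT hf))

end MeasureTheory

theorem smallest_support_set_of_independent_factors
    {Ω ι : Type*} [Fintype ι] {m0 : MeasurableSpace Ω}
    (P : Measure Ω) [IsProbabilityMeasure P]
    (B : ι → MeasurableSpace Ω) (hle : ∀ i, B i ≤ m0)
    (hgen : (⨆ i, B i) = m0)
    (hindep : ProbabilityTheory.iIndep B P)
    (V : Set (Ω → ℝ)) (hV : ∀ f ∈ V, MemLp f 2 P)
    (Δ Δ' : Set ι)
    (hΔ : ∀ f ∈ V, AEStronglyMeasurable[⨆ i ∈ Δ, B i] f P)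
    (hΔ' : ∀ f ∈ V, AEStronglyMeasurable[⨆ i ∈ Δ', B i] f P) :
    (∀ f ∈ V, AEStronglyMeasurable[⨆ i ∈ Δ ∩ Δ', B i] f P) ∧
    ∃ Δ₀ : Set ι,
      (∀ f ∈ V, AEStronglyMeasurable[⨆ i ∈ Δ₀, B i] f P) ∧
      ∀ Δ₁ : Set ι, (∀ f ∈ V, AEStronglyMeasurable[⨆ i ∈ Δ₁, B i] f P) → Δ₀ ⊆ Δ₁ := by
  set supports : Set (Set ι) := {S | ∀ f ∈ V, AEStronglyMeasurable[⨆ i ∈ S, B i] f P}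
  have h_inter : InfClosed supports := fun S hS T hT f hf ↦
    aestronglyMeasurable_biSup_inter_of_iIndep hle hindep ((hV f hf).integrable one_le_two)
      (hS f hf) (hT f hf)
  have h_univ : Set.univ ∈ supports := fun f hf ↦ by
    rw [iSup_univ, hgen]
    exact (hV f hf).aestronglyMeasurable
  exact ⟨h_inter hΔ hΔ', sInf supports,
    h_inter.sInf_mem (Set.toFinite _) h_univ subset_rfl, fun _ h ↦ sInf_le h⟩
end

section
/- Let μ₁, μ₂, ν₁, ν₂ be probability measures on standard Borel spaces and let λ, λ₁, λ₂, π be probability measures on a product space X × Y₁ × Y₂ with the same one-dimensional marginals, where π = μ ⊗ ν₁ ⊗ ν₂ is the full product measure, λ₁ has the form (projection of λ to X × Y₁) ⊗ ν₂, and λ₂ = (projection of λ to X × Y₂) ⊗ ν₁ (with coordinates reordered appropriately). Suppose λ + π = λ₁ + λ₂ as measures, and suppose all four measures λ, π, λ₁, λ₂ are extreme points of the convex set of measures on X × Y₁ × Y₂ with the given marginals invariant under a fixed measurable transformation (i.e., they are ergodic joinings). Then λ = λ₁ or λ = λ₂. -/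
/-!
Since `lam ≤ lam + π = lam₁ + lam₂`, it suffices that two ergodic probability measures are either
equal or mutually singular: a measure singular to both `lam₁` and `lam₂` but absolutely continuous
with respect to their sum is zero.
-/

open MeasureTheory Measure

namespace Ergodic

variable {α : Type*} [MeasurableSpace α] {f : α → α} {μ ν ν₁ ν₂ : Measure α}

/-- The absolutely continuous part of `μ` with respect to `ν` is invariant, hence a multiple
of `ν` by ergodicity; if it is nonzero, then `ν ≪ μ`, and ergodicity of `μ` forces `ν = μ`. -/
theorem eq_or_mutuallySingular [IsProbabilityMeasure μ] [IsProbabilityMeasure ν]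
    (hμ : Ergodic f μ) (hν : Ergodic f ν) : μ = ν ∨ μ ⟂ₘ ν := by
  rw [or_iff_not_imp_right, ← withDensity_rnDeriv_eq_zero]
  intro hac_ne
  obtain ⟨c, hc⟩ := hν.eq_smul_of_absolutelyContinuous
    (hμ.toMeasurePreserving.withDensity_rnDeriv hν.toMeasurePreserving)
    (withDensity_absolutelyContinuous _ _)
  have hc_ne : c ≠ 0 := by
    rintro rfl
    exact hac_ne (by rw [hc, zero_smul])
  have hνμ : ν ≪ μ :=
    (absolutelyContinuous_smul hc_ne).trans
      (hc ▸ (withDensity_rnDeriv_le μ ν).absolutelyContinuous)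
  exact (hμ.eq_of_absolutelyContinuous hν.toMeasurePreserving hνμ).symm

theorem eq_or_eq_of_le_add [IsProbabilityMeasure μ] [IsProbabilityMeasure ν₁]
    [IsProbabilityMeasure ν₂] (hμ : Ergodic f μ) (hν₁ : Ergodic f ν₁) (hν₂ : Ergodic f ν₂)
    (hle : μ ≤ ν₁ + ν₂) : μ = ν₁ ∨ μ = ν₂ := by
  rcases hμ.eq_or_mutuallySingular hν₁ with h | hs₁
  · exact .inl h
  rcases hμ.eq_or_mutuallySingular hν₂ with h | hs₂
  · exact .inr h
  have : μ = 0 := eq_zero_of_absolutelyContinuous_of_mutuallySingular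
    hle.absolutelyContinuous (hs₁.add_right hs₂)
  exact absurd this (NeZero.ne μ)

end Ergodic

theorem ergodic_joining_sum_decomposition_general
    {X Y₁ Y₂ : Type*} [MeasurableSpace X] [MeasurableSpace Y₁] [MeasurableSpace Y₂]
    (ν₁ : Measure Y₁) (ν₂ : Measure Y₂)
    [IsProbabilityMeasure ν₁] [IsProbabilityMeasure ν₂]
    (lam : Measure (X × Y₁ × Y₂)) [IsProbabilityMeasure lam]
    (S : X × Y₁ × Y₂ → X × Y₁ × Y₂)
    (lam₁ lam₂ π : Measure (X × Y₁ × Y₂))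
    (hlam₁ : lam₁ = Measure.map (fun q : (X × Y₁) × Y₂ => (q.1.1, q.1.2, q.2))
      ((lam.map fun p => (p.1, p.2.1)).prod ν₂))
    (hlam₂ : lam₂ = Measure.map (fun q : (X × Y₂) × Y₁ => (q.1.1, q.2, q.1.2))
      ((lam.map fun p => (p.1, p.2.2)).prod ν₁))
    (herg : Ergodic S lam)
    (herg₁ : Ergodic S lam₁) (herg₂ : Ergodic S lam₂)
    (hsum : lam + π = lam₁ + lam₂) :
    lam = lam₁ ∨ lam = lam₂ := by
  have : IsProbabilityMeasure lam₁ := by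
    have : IsProbabilityMeasure (lam.map fun p => (p.1, p.2.1)) :=
      isProbabilityMeasure_map (by fun_prop)
    exact hlam₁ ▸ isProbabilityMeasure_map (by fun_prop)
  have : IsProbabilityMeasure lam₂ := by
    have : IsProbabilityMeasure (lam.map fun p => (p.1, p.2.2)) :=
      isProbabilityMeasure_map (by fun_prop)
    exact hlam₂ ▸ isProbabilityMeasure_map (by fun_prop)
  exact herg.eq_or_eq_of_le_add herg₁ herg₂ (hsum ▸ Measure.le_add_right le_rfl)

theorem ergodic_joining_sum_decomposition
    {X Y₁ Y₂ : Type*} [MeasurableSpace X] [MeasurableSpace Y₁] [MeasurableSpace Y₂]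
    (μ : Measure X) (ν₁ : Measure Y₁) (ν₂ : Measure Y₂)
    [IsProbabilityMeasure μ] [IsProbabilityMeasure ν₁] [IsProbabilityMeasure ν₂]
    (lam : Measure (X × Y₁ × Y₂)) [IsProbabilityMeasure lam]
    (hm0 : lam.map (fun p => p.1) = μ)
    (hm1 : lam.map (fun p => p.2.1) = ν₁)
    (hm2 : lam.map (fun p => p.2.2) = ν₂)
    (S : X × Y₁ × Y₂ → X × Y₁ × Y₂)
    (lam₁ lam₂ π : Measure (X × Y₁ × Y₂))
    (hπ : π = μ.prod (ν₁.prod ν₂))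
    (hlam₁ : lam₁ = Measure.map (fun q : (X × Y₁) × Y₂ => (q.1.1, q.1.2, q.2))
      ((lam.map fun p => (p.1, p.2.1)).prod ν₂))
    (hlam₂ : lam₂ = Measure.map (fun q : (X × Y₂) × Y₁ => (q.1.1, q.2, q.1.2))
      ((lam.map fun p => (p.1, p.2.2)).prod ν₁))
    (herg : Ergodic S lam) (hergπ : Ergodic S π)
    (herg₁ : Ergodic S lam₁) (herg₂ : Ergodic S lam₂)
    (hsum : lam + π = lam₁ + lam₂) :
    lam = lam₁ ∨ lam = lam₂ :=
  ergodic_joining_sum_decomposition_general ν₁ ν₂ lam S lam₁ lam₂ π hlam₁ hlam₂ herg herg₁ herg₂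
    hsum
end

section
/- Let T and S be unitary operators on Hilbert spaces H and K respectively with a bounded operator Φ : H → K satisfying Φ ∘ T = S ∘ Φ and ‖Φ‖ ≤ 1. Then for every f ∈ H, the spectral measure of Φ(f) with respect to S is absolutely continuous with respect to the spectral measure of f with respect to T. -/
/-!
Expanding `‖∑ cₙ zⁿ‖²` and integrating against the spectral measure of `v` shows that
`∑ cₙ zⁿ ↦ ∑ cₙ U⁻ⁿ v` is isometric from `L²(σ_v)` into the cyclic space of `v`. The
intertwining contraction `Φ` maps `∑ cₙ T⁻ⁿ f` to `∑ cₙ S⁻ⁿ (Φ f)`, so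
`∫ |p|² dσ_{Φf} ≤ ∫ |p|² dσ_f` for every trigonometric polynomial `p`. Both sides are continuous
in `p` for the sup norm, so by Stone–Weierstrass the inequality holds for every continuous `p`;
taking `p = √ψ` compares the integrals of every continuous `ψ ≥ 0`, and for finite measures on the
circle this means `σ_{Φf} ≤ σ_f`.
-/

open MeasureTheory

noncomputable instance : MeasurableSpace Circle := borel Circle
instance : BorelSpace Circle := ⟨rfl⟩

/-- `μ` is the spectral measure of the vector `v` for the unitary `U`:
its Fourier coefficients are `⟪Uⁿ v, v⟫`. -/
def IsSpectralMeasure {H : Type*} [NormedAddCommGroup H] [InnerProductSpace ℂ H]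
    (U : H ≃ₗᵢ[ℂ] H) (v : H) (μ : Measure Circle) : Prop :=
  ∀ n : ℤ, (inner ℂ ((U ^ n) v) v : ℂ) = ∫ z : Circle, (z : ℂ) ^ n ∂μ

open Set Filter Topology ComplexConjugate
open scoped BoundedContinuousFunction NNReal

theorem MeasureTheory.Measure.le_of_forall_integral_le {Ω : Type*} [MeasurableSpace Ω]
    [TopologicalSpace Ω] [TopologicalSpace.PseudoMetrizableSpace Ω] [BorelSpace Ω]
    {μ ν : Measure Ω} [IsFiniteMeasure μ] [IsFiniteMeasure ν]
    (h : ∀ f : Ω →ᵇ ℝ≥0, ∫ x, (f x : ℝ) ∂ν ≤ ∫ x, (f x : ℝ) ∂μ) : ν ≤ μ := by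
  have closed (F : Set Ω) (hF : IsClosed F) : ν F ≤ μ F := by
    refine le_of_tendsto_of_tendsto' (HasOuterApproxClosed.tendsto_lintegral_apprSeq hF ν)
      (HasOuterApproxClosed.tendsto_lintegral_apprSeq hF μ) fun n => ?_
    rw [← ENNReal.toReal_le_toReal (BoundedContinuousFunction.lintegral_lt_top_of_nnreal ν _).ne
      (BoundedContinuousFunction.lintegral_lt_top_of_nnreal μ _).ne,
      BoundedContinuousFunction.toReal_lintegral_coe_eq_integral,
      BoundedContinuousFunction.toReal_lintegral_coe_eq_integral]
    exact h _
  refine Measure.le_iff.2 fun A hA => ?_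
  rw [hA.measure_eq_iSup_isClosed_of_ne_top (measure_ne_top ν A)]
  exact iSup₂_le fun F hFA => iSup_le fun hF => (closed F hF).trans (measure_mono hFA)

theorem ContinuousMap.continuous_integral {X : Type*} [TopologicalSpace X] [CompactSpace X]
    [MeasurableSpace X] [BorelSpace X] (μ : Measure X) [IsFiniteMeasure μ] :
    Continuous fun g : C(X, ℝ) => ∫ x, g x ∂μ :=
  (MeasureTheory.continuous_integral.comp (toLp 1 μ ℝ).continuous).congr fun g =>
    integral_congr_ae (coeFn_toLp μ g)

theorem ContinuousMap.continuous_integral_norm_sq {X E : Type*} [TopologicalSpace X]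
    [CompactSpace X] [MeasurableSpace X] [BorelSpace X] [NormedAddCommGroup E]
    (μ : Measure X) [IsFiniteMeasure μ] :
    Continuous fun g : C(X, E) => ∫ x, ‖g x‖ ^ 2 ∂μ :=
  (continuous_integral μ).comp (continuous_postcomp (X := X) ⟨fun e : E => ‖e‖ ^ 2, by fun_prop⟩ :)

namespace Circle

lemma conj_coe_zpow (z : Circle) (n : ℤ) : conj ((z : ℂ) ^ n) = (z : ℂ) ^ (-n) := by
  rw [← coe_zpow, ← coe_inv_eq_conj, ← coe_zpow, zpow_neg]

lemma sq_norm_sum_mul_zpow (z : Circle) (s : Finset ℤ) (c : ℤ → ℂ) :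
    (‖∑ n ∈ s, c n * (z : ℂ) ^ n‖ : ℂ) ^ 2
      = ∑ m ∈ s, ∑ n ∈ s, conj (c m) * c n * (z : ℂ) ^ (n - m) := by
  simp only [← Complex.conj_mul', map_sum, Finset.sum_mul_sum, map_mul,
    conj_coe_zpow]
  refine Finset.sum_congr rfl fun m _ => Finset.sum_congr rfl fun n _ => ?_
  rw [sub_eq_neg_add, zpow_add₀ (coe_ne_zero z)]
  ring

noncomputable def monomial (n : ℤ) : C(Circle, ℂ) :=
  ⟨fun z => ((z ^ n : Circle) : ℂ), continuous_subtype_val.comp (continuous_zpow n)⟩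

@[simp] lemma monomial_apply (n : ℤ) (z : Circle) : monomial n z = (z : ℂ) ^ n := rfl

lemma star_monomial (n : ℤ) : star (monomial n) = monomial (-n) := by
  ext z; exact conj_coe_zpow z n

noncomputable def monomialSubalgebra : StarSubalgebra ℂ C(Circle, ℂ) where
  toSubalgebra := Algebra.adjoin ℂ (range monomial)
  star_mem' := by
    change Algebra.adjoin ℂ (range monomial) ≤ star (Algebra.adjoin ℂ (range monomial))
    refine Algebra.adjoin_le ?_
    rintro - ⟨n, rfl⟩
    exact Algebra.subset_adjoin ⟨-n, (star_monomial n).symm⟩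

lemma monomialSubalgebra_toSubmodule :
    Subalgebra.toSubmodule monomialSubalgebra.toSubalgebra = Submodule.span ℂ (range monomial) := by
  apply Algebra.adjoin_eq_span_of_subset
  refine Subset.trans ?_ Submodule.subset_span
  intro x hx
  refine Submonoid.closure_induction (fun _ => id) ⟨0, ?_⟩ ?_ hx
  · ext z; simp
  · rintro - - - - ⟨m, rfl⟩ ⟨n, rfl⟩
    exact ⟨m + n, by ext z; simp [zpow_add₀ (coe_ne_zero z)]⟩

lemma monomialSubalgebra_separatesPoints : monomialSubalgebra.SeparatesPoints := by
  intro z w hzw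
  refine ⟨_, ⟨monomial 1, Algebra.subset_adjoin ⟨1, rfl⟩, rfl⟩, ?_⟩
  simpa [Circle.coe_inj] using hzw

lemma dense_span_monomial : Dense (Submodule.span ℂ (range monomial) : Set C(Circle, ℂ)) := by
  rw [← monomialSubalgebra_toSubmodule, Submodule.dense_iff_topologicalClosure_eq_top]
  exact congr_arg (Subalgebra.toSubmodule <| StarSubalgebra.toSubalgebra ·) <|
    ContinuousMap.starSubalgebra_topologicalClosure_eq_top_of_separatesPoints _
      monomialSubalgebra_separatesPoints

end Circle

section

variable {H K : Type*} [NormedAddCommGroup H] [InnerProductSpace ℂ H]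
  [NormedAddCommGroup K] [InnerProductSpace ℂ K]

lemma LinearIsometryEquiv.inner_zpow_apply_zpow_apply (U : H ≃ₗᵢ[ℂ] H) (m n : ℤ) (v : H) :
    inner ℂ ((U ^ m) v) ((U ^ n) v) = inner ℂ ((U ^ (m - n)) v) v := by
  have h : (U ^ m) v = (U ^ n) ((U ^ (m - n)) v) := by
    rw [← Function.comp_apply (f := ⇑(U ^ n)), ← coe_mul, ← zpow_add, add_sub_cancel]
  rw [h, inner_map_map]

lemma Function.Semiconj.linearIsometryEquiv_zpow {T : H ≃ₗᵢ[ℂ] H} {S : K ≃ₗᵢ[ℂ] K} {Φ : H → K}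
    (h : Semiconj Φ T S) (n : ℤ) : Semiconj Φ ⇑(T ^ n) ⇑(S ^ n) := by
  induction n using Int.induction_on with
  | zero => exact fun _ => rfl
  | succ n ih =>
    rw [zpow_add_one, zpow_add_one, LinearIsometryEquiv.coe_mul, LinearIsometryEquiv.coe_mul]
    exact ih.comp_right h
  | pred n ih =>
    rw [zpow_sub_one, zpow_sub_one, LinearIsometryEquiv.coe_mul, LinearIsometryEquiv.coe_mul]
    exact ih.comp_right (h.inverses_right T.apply_symm_apply S.symm_apply_apply)

lemma LinearIsometryEquiv.sq_norm_sum_smul_zpow_neg (U : H ≃ₗᵢ[ℂ] H) (v : H) (s : Finset ℤ)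
    (c : ℤ → ℂ) :
    (‖∑ n ∈ s, c n • (U ^ (-n)) v‖ : ℂ) ^ 2
      = ∑ m ∈ s, ∑ n ∈ s, conj (c m) * c n * inner ℂ ((U ^ (n - m)) v) v := by
  refine (inner_self_eq_norm_sq_to_K (𝕜 := ℂ) (∑ n ∈ s, c n • (U ^ (-n)) v)).symm.trans ?_
  rw [sum_inner]
  refine Finset.sum_congr rfl fun m _ => ?_
  rw [inner_smul_left, inner_sum, Finset.mul_sum]
  refine Finset.sum_congr rfl fun n _ => ?_
  rw [inner_smul_right, inner_zpow_apply_zpow_apply, neg_sub_neg]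
  ring

theorem IsSpectralMeasure.integral_norm_sum_sq {U : H ≃ₗᵢ[ℂ] H} {v : H} {μ : Measure Circle}
    [IsFiniteMeasure μ] (hμ : IsSpectralMeasure U v μ) (s : Finset ℤ) (c : ℤ → ℂ) :
    ∫ z, ‖∑ n ∈ s, c n * (z : ℂ) ^ n‖ ^ 2 ∂μ = ‖∑ n ∈ s, c n • (U ^ (-n)) v‖ ^ 2 := by
  have integrable_zpow (k : ℤ) : Integrable (fun z : Circle => (z : ℂ) ^ k) μ :=
    (Circle.monomial k).continuous.integrable_of_hasCompactSupport (.of_compactSpace _)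
  apply Complex.ofReal_injective
  simp only [← integral_complex_ofReal, Complex.ofReal_pow, Circle.sq_norm_sum_mul_zpow,
    U.sq_norm_sum_smul_zpow_neg]
  rw [integral_finsetSum _ fun m _ => integrable_finsetSum _ fun n _ =>
    (integrable_zpow _).const_mul _]
  refine Finset.sum_congr rfl fun m _ => ?_
  rw [integral_finsetSum _ fun n _ => (integrable_zpow _).const_mul _]
  refine Finset.sum_congr rfl fun n _ => ?_
  rw [integral_const_mul, hμ]

theorem IsSpectralMeasure.integral_norm_sum_sq_le_of_semiconj {T : H ≃ₗᵢ[ℂ] H} {S : K ≃ₗᵢ[ℂ] K}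
    {Φ : H →L[ℂ] K} (hΦ : ‖Φ‖ ≤ 1) (h : Function.Semiconj Φ T S) {f : H} {μ ν : Measure Circle}
    [IsFiniteMeasure μ] [IsFiniteMeasure ν] (hμ : IsSpectralMeasure T f μ)
    (hν : IsSpectralMeasure S (Φ f) ν) (s : Finset ℤ) (c : ℤ → ℂ) :
    ∫ z, ‖∑ n ∈ s, c n * (z : ℂ) ^ n‖ ^ 2 ∂ν ≤ ∫ z, ‖∑ n ∈ s, c n * (z : ℂ) ^ n‖ ^ 2 ∂μ := by
  have h_sum : ∑ n ∈ s, c n • (S ^ (-n)) (Φ f) = Φ (∑ n ∈ s, c n • (T ^ (-n)) f) := by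
    simp only [map_sum, map_smul, (h.linearIsometryEquiv_zpow _).eq]
  rw [hν.integral_norm_sum_sq, hμ.integral_norm_sum_sq, h_sum]
  gcongr
  exact (Φ.le_of_opNorm_le hΦ _).trans_eq (one_mul _)

theorem IsSpectralMeasure.integral_norm_sq_le_of_semiconj {T : H ≃ₗᵢ[ℂ] H} {S : K ≃ₗᵢ[ℂ] K}
    {Φ : H →L[ℂ] K} (hΦ : ‖Φ‖ ≤ 1) (h : Function.Semiconj Φ T S) {f : H} {μ ν : Measure Circle}
    [IsFiniteMeasure μ] [IsFiniteMeasure ν] (hμ : IsSpectralMeasure T f μ)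
    (hν : IsSpectralMeasure S (Φ f) ν) (g : C(Circle, ℂ)) :
    ∫ z, ‖g z‖ ^ 2 ∂ν ≤ ∫ z, ‖g z‖ ^ 2 ∂μ := by
  refine Circle.dense_span_monomial.induction (fun p hp => ?_)
    (isClosed_le (ContinuousMap.continuous_integral_norm_sq ν)
      (ContinuousMap.continuous_integral_norm_sq μ)) g
  obtain ⟨c, rfl⟩ := Finsupp.mem_span_range_iff_exists_finsupp.1 hp
  simpa [Finsupp.sum] using hμ.integral_norm_sum_sq_le_of_semiconj hΦ h hν c.support c

end

theorem spectral_measure_of_markov_image_abs_continuous_general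
    {H K : Type*}
    [NormedAddCommGroup H] [InnerProductSpace ℂ H]
    [NormedAddCommGroup K] [InnerProductSpace ℂ K]
    (T : H ≃ₗᵢ[ℂ] H) (S : K ≃ₗᵢ[ℂ] K)
    (Φ : H →L[ℂ] K) (hΦnorm : ‖Φ‖ ≤ 1)
    (hint : ∀ x : H, Φ (T x) = S (Φ x))
    (f : H) (μf μΦf : Measure Circle)
    [IsFiniteMeasure μf] [IsFiniteMeasure μΦf]
    (hf : IsSpectralMeasure T f μf) (hΦf : IsSpectralMeasure S (Φ f) μΦf) :
    μΦf ≪ μf := by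
  refine Measure.absolutelyContinuous_of_le (Measure.le_of_forall_integral_le fun ψ => ?_)
  simpa using hf.integral_norm_sq_le_of_semiconj hΦnorm hint hΦf
    ⟨fun z => ((NNReal.sqrt (ψ z) : ℝ) : ℂ), by fun_prop⟩

theorem spectral_measure_of_markov_image_abs_continuous
    {H K : Type*}
    [NormedAddCommGroup H] [InnerProductSpace ℂ H] [CompleteSpace H]
    [NormedAddCommGroup K] [InnerProductSpace ℂ K] [CompleteSpace K]
    (T : H ≃ₗᵢ[ℂ] H) (S : K ≃ₗᵢ[ℂ] K)
    (Φ : H →L[ℂ] K) (hΦnorm : ‖Φ‖ ≤ 1)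
    (hint : ∀ x : H, Φ (T x) = S (Φ x))
    (f : H) (μf μΦf : Measure Circle)
    [IsFiniteMeasure μf] [IsFiniteMeasure μΦf]
    (hf : IsSpectralMeasure T f μf) (hΦf : IsSpectralMeasure S (Φ f) μΦf) :
    μΦf ≪ μf :=
  spectral_measure_of_markov_image_abs_continuous_general T S Φ hΦnorm hint f μf μΦf hf hΦf
end
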